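/- arXiv:2306.08250 — 8 statements merged into one kernel-verified Lean document; each statement's English description precedes it below -/
import Mathlib

section
/- Let G be a group and g, h elements of G. Then for every positive integer n, the element g^n h^n lies in <<g h>>^+. -/
/-- The set of conjugates `h⁻¹ * g * h` of an element `g` of a group. -/
def conjSet {G : Type*} [Group G] (g : G) : Set G := {x | ∃ h : G, x = h⁻¹ * g * h}

/-- `<<g>>^+`: the subsemigroup generated by all conjugates of `g`, i.e. the set of
nonempty finite products of conjugates of `g`. -/
def ggP {G : Type*} [Group G] (g : G) : Subsemigroup G := Subsemigroup.closure (conjSet g)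

/-
The identity `g ^ (n + 1) * h ^ (n + 1) = g * (g ^ n * h ^ n) * g⁻¹ * (g * h)` expresses the
next element as a conjugate of the previous one times `g * h`, so induction on `n` works once
`<<a>>^+` is known to be closed under conjugation.
-/

lemma mem_ggP_self {G : Type*} [Group G] (a : G) : a ∈ ggP a :=
  Subsemigroup.subset_closure ⟨1, by group⟩

lemma conj_mem_ggP {G : Type*} [Group G] {a x : G} (c : G) (hx : x ∈ ggP a) :
    c * x * c⁻¹ ∈ ggP a := by
  induction hx using Subsemigroup.closure_induction with
  | mem y hy =>
    obtain ⟨k, rfl⟩ := hy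
    exact Subsemigroup.subset_closure ⟨k * c⁻¹, by group⟩
  | mul y z _ _ hy hz =>
    have hsplit : c * (y * z) * c⁻¹ = (c * y * c⁻¹) * (c * z * c⁻¹) := by group
    rw [hsplit]
    exact mul_mem hy hz

/-- for every positive integer `n`, `g^n * h^n ∈ <<g*h>>^+`. -/
theorem pow_mul_pow_mem_ggP_mul {G : Type*} [Group G] (g h : G) :
    ∀ n : ℕ, 0 < n → g ^ n * h ^ n ∈ ggP (g * h) := by
  intro n hn
  obtain ⟨n, rfl⟩ := Nat.exists_eq_add_one_of_ne_zero hn.ne'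
  induction n with
  | zero => simpa using mem_ggP_self (g * h)
  | succ n ih =>
    have hstep : g ^ (n + 2) * h ^ (n + 2) = g * (g ^ (n + 1) * h ^ (n + 1)) * g⁻¹ * (g * h) := by
      rw [pow_succ' g, pow_succ h]
      group
    rw [hstep]
    exact mul_mem (conj_mem_ggP g (ih n.succ_pos)) (mem_ggP_self (g * h))
end

section
/- Let G be a group and g, h, x elements of G. If the commutator [g,h] = g^{-1} h^{-1} g h lies in <<x>>^+, then [g^n, h^m] lies in <<x>>^+ for all positive integers n and m. -/
lemma ggP_conj_mem {G : Type*} [Group G] {x y : G} (k : G) (hy : y ∈ ggP x) :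
    k⁻¹ * y * k ∈ ggP x := by
  induction hy using Subsemigroup.closure_induction with
  | mem a ha =>
    obtain ⟨h, rfl⟩ := ha
    exact Subsemigroup.subset_closure ⟨h * k, by group⟩
  | mul a b _ _ iha ihb =>
    have : k⁻¹ * (a * b) * k = (k⁻¹ * a * k) * (k⁻¹ * b * k) := by group
    rw [this]
    exact mul_mem iha ihb

/-- if the commutator `[g,h] = g⁻¹h⁻¹gh` lies in `<<x>>^+`, then
`[g^n, h^m] ∈ <<x>>^+` for all positive integers `n`, `m`. -/
theorem commutator_pow_mem_ggP {G : Type*} [Group G] (g h x : G)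
    (hc : g⁻¹ * h⁻¹ * g * h ∈ ggP x) :
    ∀ n m : ℕ, 0 < n → 0 < m →
      (g ^ n)⁻¹ * (h ^ m)⁻¹ * g ^ n * h ^ m ∈ ggP x := by
  have hn : ∀ n : ℕ, 0 < n → (g ^ n)⁻¹ * h⁻¹ * g ^ n * h ∈ ggP x := by
    intro n hn
    induction n with
    | zero => omega
    | succ n ih =>
      rcases Nat.eq_zero_or_pos n with rfl | hpos
      · simpa using hc
      · have key : (g ^ (n + 1))⁻¹ * h⁻¹ * g ^ (n + 1) * h
            = ((g ^ n)⁻¹ * (g⁻¹ * h⁻¹ * g * h) * g ^ n)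
              * ((g ^ n)⁻¹ * h⁻¹ * g ^ n * h) := by
          rw [pow_succ]; group
        rw [key]
        exact mul_mem (ggP_conj_mem _ hc) (ih hpos)
  intro n m hn0 hm0
  induction m with
  | zero => omega
  | succ m ih =>
    rcases Nat.eq_zero_or_pos m with rfl | hpos
    · simpa using hn n hn0
    · have key : (g ^ n)⁻¹ * (h ^ (m + 1))⁻¹ * g ^ n * h ^ (m + 1)
          = ((g ^ n)⁻¹ * h⁻¹ * g ^ n * h)
            * (h⁻¹ * ((g ^ n)⁻¹ * (h ^ m)⁻¹ * g ^ n * h ^ m) * h) := by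
        rw [pow_succ]; group
      rw [key]
      exact mul_mem (hn n hn0) (ggP_conj_mem _ (ih hpos))
end

section
/- Let G be a group, g and h elements of G, and n and m positive integers. Then the element ((hg)^{-m} (gh)^{m})^{n} ((hg)^{m} (gh)^{-m})^{n} lies in <<[gh, hg]>>^+. -/
/-- `ggP c` is invariant under conjugation. -/
lemma ggP_conj {G : Type*} [Group G] {c x : G} (hx : x ∈ ggP c) (t : G) :
    t⁻¹ * x * t ∈ ggP c := by
  induction hx using Subsemigroup.closure_induction with
  | mem y hy =>
      obtain ⟨s, rfl⟩ := hy
      exact Subsemigroup.subset_closure ⟨s * t, by group⟩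
  | mul y z hy hz ihy ihz =>
      have heq : t⁻¹ * (y * z) * t = (t⁻¹ * y * t) * (t⁻¹ * z * t) := by group
      rw [heq]; exact mul_mem ihy ihz

/-- If `[b,y] ∈ ggP c` then `[b, y^M] ∈ ggP c` for `M ≥ 1`. -/
lemma comm_pow_right {G : Type*} [Group G] {c b y : G}
    (hbase : b⁻¹ * y⁻¹ * b * y ∈ ggP c) (M : ℕ) (hM : 0 < M) :
    b⁻¹ * (y ^ M)⁻¹ * b * y ^ M ∈ ggP c := by
  induction M with
  | zero => omega
  | succ k ih =>
    rcases Nat.eq_zero_or_pos k with hk | hk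
    · subst hk; simpa using hbase
    · have h3 := mul_mem hbase (ggP_conj (ih hk) y)
      have heq : (b⁻¹ * y⁻¹ * b * y) * (y⁻¹ * (b⁻¹ * (y ^ k)⁻¹ * b * y ^ k) * y)
          = b⁻¹ * (y ^ (k + 1))⁻¹ * b * y ^ (k + 1) := by group
      rwa [heq] at h3

/-- If `[b,y] ∈ ggP c` then `[b^M, y^M] ∈ ggP c` for `M ≥ 1`. -/
lemma comm_pow_pow {G : Type*} [Group G] {c b y : G}
    (hbase : b⁻¹ * y⁻¹ * b * y ∈ ggP c) (M : ℕ) (hM : 0 < M) :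
    (b ^ M)⁻¹ * (y ^ M)⁻¹ * b ^ M * y ^ M ∈ ggP c := by
  suffices h : ∀ k : ℕ, 0 < k → (b ^ k)⁻¹ * (y ^ M)⁻¹ * b ^ k * y ^ M ∈ ggP c from h M hM
  intro k hk
  induction k with
  | zero => omega
  | succ j ih =>
    rcases Nat.eq_zero_or_pos j with hj | hj
    · subst hj; simpa using comm_pow_right hbase M hM
    · have h1 := ggP_conj (comm_pow_right hbase M hM) (b ^ j)
      have h3 := mul_mem h1 (ih hj)
      have heq : ((b ^ j)⁻¹ * (b⁻¹ * (y ^ M)⁻¹ * b * y ^ M) * b ^ j) *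
            ((b ^ j)⁻¹ * (y ^ M)⁻¹ * b ^ j * y ^ M)
          = (b ^ (j + 1))⁻¹ * (y ^ M)⁻¹ * b ^ (j + 1) * y ^ M := by group
      rwa [heq] at h3

/-- If `u*v ∈ ggP c` then `u^N * v^N ∈ ggP c` for `N ≥ 1`. -/
lemma pow_mul_pow_mem {G : Type*} [Group G] {c u v : G}
    (huv : u * v ∈ ggP c) (N : ℕ) (hN : 0 < N) : u ^ N * v ^ N ∈ ggP c := by
  induction N with
  | zero => omega
  | succ j ih =>
    rcases Nat.eq_zero_or_pos j with hj | hj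
    · subst hj; simpa using huv
    · have h3 := mul_mem huv (ggP_conj (ih hj) v)
      have heq : (u * v) * (v⁻¹ * (u ^ j * v ^ j) * v) = u ^ (j + 1) * v ^ (j + 1) := by
        group
      rwa [heq] at h3

/-- for positive integers `n`, `m`,
`((hg)^{-m}(gh)^m)^n ((hg)^m (gh)^{-m})^n ∈ <<[gh,hg]>>^+`. -/
theorem lem_for_longitude {G : Type*} [Group G] (g h : G) (n m : ℤ)
    (hn : 0 < n) (hm : 0 < m) :
    ((h * g) ^ (-m) * (g * h) ^ m) ^ n * ((h * g) ^ m * (g * h) ^ (-m)) ^ n ∈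
      ggP ((g * h)⁻¹ * (h * g)⁻¹ * (g * h) * (h * g)) := by
  obtain ⟨M, rfl⟩ : ∃ M : ℕ, m = (M : ℤ) := ⟨m.toNat, (Int.toNat_of_nonneg hm.le).symm⟩
  obtain ⟨N, rfl⟩ : ∃ N : ℕ, n = (N : ℤ) := ⟨n.toNat, (Int.toNat_of_nonneg hn.le).symm⟩
  have hM : 0 < M := by exact_mod_cast hm
  have hN : 0 < N := by exact_mod_cast hn
  rw [zpow_neg, zpow_neg, zpow_natCast, zpow_natCast, zpow_natCast, zpow_natCast]
  set a := g * h with ha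
  set b := h * g with hb
  -- base: [b, a⁻¹] = b⁻¹ a b a⁻¹ is a conjugate of c = a⁻¹ b⁻¹ a b
  have hbase : b⁻¹ * (a⁻¹)⁻¹ * b * a⁻¹ ∈ ggP (a⁻¹ * b⁻¹ * a * b) :=
    Subsemigroup.subset_closure ⟨a⁻¹, by group⟩
  have key := comm_pow_pow hbase M hM
  have huv : ((b ^ M)⁻¹ * a ^ M) * (b ^ M * (a ^ M)⁻¹) ∈ ggP (a⁻¹ * b⁻¹ * a * b) := by
    have heq : ((b ^ M)⁻¹ * a ^ M) * (b ^ M * (a ^ M)⁻¹)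
        = (b ^ M)⁻¹ * ((a⁻¹) ^ M)⁻¹ * b ^ M * (a⁻¹) ^ M := by group
    rw [heq]; exact key
  exact pow_mul_pow_mem huv N hN
end

section
/- Let (p,q) and (p',q') be two pairs of nonzero integers such that p q = p' q' and p is not equal to any of p', -p', q', -q'. Then at least one of the groups G_{p,q} and G_{p',q'} admits a generalized torsion element. -/
/-- A generalized torsion element: a nontrivial element `g` with `1 ∈ <<g>>^+`. -/
def IsGenTorsionElem {G : Type*} [Group G] (g : G) : Prop := g ≠ 1 ∧ (1 : G) ∈ ggP g

/-- `G` admits a generalized torsion element. -/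
def HasGenTorsion (G : Type*) [Group G] : Prop := ∃ g : G, IsGenTorsionElem g

/-- The relators of the presentation
`< a, b, t | t a^p t⁻¹ = b⁻¹ a^p, t b^{-q} a⁻¹ t⁻¹ = b^{-q}, [b^q, a^p] = 1 >`,
where `a`, `b`, `t` are the generators `0`, `1`, `2` respectively, and
`[g,h] = g⁻¹ h⁻¹ g h`. -/
def gpqRels (p q : ℤ) : Set (FreeGroup (Fin 3)) :=
  let a : FreeGroup (Fin 3) := FreeGroup.of 0
  let b : FreeGroup (Fin 3) := FreeGroup.of 1
  let t : FreeGroup (Fin 3) := FreeGroup.of 2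
  { t * a ^ p * t⁻¹ * (b⁻¹ * a ^ p)⁻¹,
    t * b ^ (-q) * a⁻¹ * t⁻¹ * (b ^ (-q))⁻¹,
    (b ^ q)⁻¹ * (a ^ p)⁻¹ * b ^ q * a ^ p }

/-- `G_{p,q}`, the fundamental group of the 3-manifold obtained by 0-surgery along the
double twist knot `K_{p,q}`. -/
abbrev Gpq (p q : ℤ) := PresentedGroup (gpqRels p q)

/-!
The relation `[b^q, a^p] = 1` exhibits `[b^q, a]` (and `[a^p, b]`) as generalized torsion as
soon as it is nontrivial, because `[y, x^n]` is a product of `n` conjugates of `[y, x]`.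
Nontriviality is detected in `SO(3)`: if `x`, `z` are rotations by `π / 2p`, `π / 2q` about two
perpendicular axes, then `a, b, t ↦ x², z², z⁻¹x⁻¹` respects the relations, since `x^{2p}` and
`z^{2q}` are commuting half turns each inverting the other rotation; and `z^{2q}` commutes with
`x²` only if `x⁴ = 1`, i.e. only if `|p| = 1`. Symmetrically for `q`. Finally, `|p| = |q| = 1`
together with `pq = p'q'` forces `p = ±p'`.
-/

section GenTorsion

variable {G : Type*} [Group G]

lemma commute_iff_inv_mul_inv_mul_mul_eq_one {a b : G} :
    Commute a b ↔ a⁻¹ * b⁻¹ * a * b = 1 := by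
  rw [← Commute.inv_inv_iff, ← commutatorElement_eq_one_iff_commute, commutatorElement_def,
    inv_inv, inv_inv]

lemma commutator_pow_succ_mem_ggP (x y : G) (n : ℕ) :
    y⁻¹ * (x ^ (n + 1))⁻¹ * y * x ^ (n + 1) ∈ ggP (y⁻¹ * x⁻¹ * y * x) := by
  induction n with
  | zero => exact Subsemigroup.subset_closure ⟨1, by group⟩
  | succ n ih =>
    have hsplit : y⁻¹ * (x ^ (n + 2))⁻¹ * y * x ^ (n + 2) =
        (y⁻¹ * (x ^ (n + 1))⁻¹ * y * x ^ (n + 1)) *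
          ((x ^ (n + 1))⁻¹ * (y⁻¹ * x⁻¹ * y * x) * x ^ (n + 1)) := by
      group
    rw [hsplit]
    exact mul_mem ih (Subsemigroup.subset_closure ⟨_, rfl⟩)

lemma hasGenTorsion_of_commute_zpow {x y : G} {n : ℤ} (hn : n ≠ 0) (h : Commute y (x ^ n))
    (hxy : ¬Commute y x) : HasGenTorsion G := by
  obtain ⟨m, hm⟩ := Nat.exists_eq_add_one_of_ne_zero (Int.natAbs_ne_zero.mpr hn)
  have hcomm : Commute y (x ^ (m + 1)) := by
    rcases Int.natAbs_eq n with hn' | hn'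
    · rwa [hn', hm, zpow_natCast] at h
    · rw [hn', hm, zpow_neg, zpow_natCast] at h
      simpa using h.inv_right
  rw [commute_iff_inv_mul_inv_mul_mul_eq_one] at hcomm hxy
  exact ⟨_, hxy, hcomm ▸ commutator_pow_succ_mem_ggP x y m⟩

lemma zpow_four_eq_one_of_commute_zpow_two {g h : G} (hg : g * h * g⁻¹ = h⁻¹)
    (hc : Commute g (h ^ (2 : ℤ))) : h ^ (4 : ℤ) = 1 := by
  have hsq := conj_zpow (a := g) (b := h) (i := 2)
  rw [hg, hc.eq, mul_inv_cancel_right] at hsq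
  calc h ^ (4 : ℤ) = (h⁻¹ ^ (2 : ℤ))⁻¹ * h ^ (2 : ℤ) := by group
    _ = 1 := by rw [hsq, inv_mul_cancel]

end GenTorsion

namespace Gpq

variable {p q : ℤ}

def a : Gpq p q := PresentedGroup.of 0

def b : Gpq p q := PresentedGroup.of 1

lemma commute_b_zpow_a_zpow : Commute ((b : Gpq p q) ^ q) (a ^ p) := by
  have h := PresentedGroup.one_of_mem (rels := gpqRels p q) (Or.inr (Or.inr rfl))
  simp only [map_mul, map_inv, map_zpow] at h
  exact commute_iff_inv_mul_inv_mul_mul_eq_one.mpr h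

variable {H : Type*} [Group H] {x z : H}

lemma lift_eq_one_of_conj_eq_inv (hx : x ^ (2 * p) * z * (x ^ (2 * p))⁻¹ = z⁻¹)
    (hz : z ^ (2 * q) * x * (z ^ (2 * q))⁻¹ = x⁻¹) (hz4 : z ^ (4 * q) = 1) :
    ∀ r ∈ gpqRels p q,
      FreeGroup.lift ![x ^ (2 : ℤ), z ^ (2 : ℤ), z⁻¹ * x⁻¹] r = 1 := by
  simp only [gpqRels, Set.mem_insert_iff, Set.mem_singleton_iff]
  rintro r (rfl | rfl | rfl) <;>
    simp only [map_mul, map_inv, map_zpow, FreeGroup.lift_apply_of, Matrix.cons_val_zero,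
      Matrix.cons_val_one, Matrix.cons_val_two, Matrix.head_cons, Matrix.tail_cons, ← zpow_mul]
  · calc _ = z⁻¹ * (x ^ (2 * p) * z * (x ^ (2 * p))⁻¹) * z ^ 2 := by group
      _ = 1 := by rw [hx]; group
  · calc _ = z⁻¹ * x⁻¹ * (z ^ (2 * q))⁻¹ * x⁻¹ * z * z ^ (2 * q) := by group
      _ = z⁻¹ * x⁻¹ * (z ^ (2 * q))⁻¹ * (z ^ (2 * q) * x * (z ^ (2 * q))⁻¹) * z *
            z ^ (2 * q) := by
          rw [hz]
      _ = 1 := by group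
  · have hx' : (x ^ (2 * p))⁻¹ * z * x ^ (2 * p) = z⁻¹ := by
      conv_lhs => rw [← inv_inv z, ← hx]
      group
    have hconj := conj_zpow (a := (x ^ (2 * p))⁻¹) (b := z) (i := 2 * q)
    rw [inv_inv, hx'] at hconj
    calc _ = (z ^ (2 * q))⁻¹ * ((x ^ (2 * p))⁻¹ * z ^ (2 * q) * x ^ (2 * p)) := by group
      _ = (z ^ (4 * q))⁻¹ := by rw [← hconj]; group
      _ = 1 := by rw [hz4, inv_one]

lemma hasGenTorsion_of_conj_eq_inv (hp : p ≠ 0) (hq : q ≠ 0)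
    (hx : x ^ (2 * p) * z * (x ^ (2 * p))⁻¹ = z⁻¹)
    (hz : z ^ (2 * q) * x * (z ^ (2 * q))⁻¹ = x⁻¹)
    (hz4 : z ^ (4 * q) = 1) (hne : x ^ (4 : ℤ) ≠ 1 ∨ z ^ (4 : ℤ) ≠ 1) :
    HasGenTorsion (Gpq p q) := by
  let ρ : Gpq p q →* H := PresentedGroup.toGroup (lift_eq_one_of_conj_eq_inv hx hz hz4)
  have ha : ρ a = x ^ (2 : ℤ) := PresentedGroup.toGroup.of _
  have hb : ρ b = z ^ (2 : ℤ) := PresentedGroup.toGroup.of _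
  rcases hne with hx4 | hz4ne
  · refine hasGenTorsion_of_commute_zpow hp commute_b_zpow_a_zpow fun h => hx4 ?_
    have hρ := h.map ρ
    rw [map_zpow, ha, hb, ← zpow_mul] at hρ
    exact zpow_four_eq_one_of_commute_zpow_two hz hρ
  · refine hasGenTorsion_of_commute_zpow hq commute_b_zpow_a_zpow.symm fun h => hz4ne ?_
    have hρ := h.map ρ
    rw [map_zpow, ha, hb, ← zpow_mul] at hρ
    exact zpow_four_eq_one_of_commute_zpow_two hx hρ

end Gpq

def AddChar.toUnits {A M : Type*} [AddGroup A] [Monoid M] (ψ : AddChar A M) : AddChar A Mˣ where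
  toFun a := ⟨ψ a, ψ (-a), by rw [← ψ.map_add_eq_mul, add_neg_cancel, ψ.map_zero_eq_one],
    by rw [← ψ.map_add_eq_mul, neg_add_cancel, ψ.map_zero_eq_one]⟩
  map_zero_eq_one' := Units.ext ψ.map_zero_eq_one
  map_add_eq_mul' a b := Units.ext (ψ.map_add_eq_mul a b)

@[simp]
lemma AddChar.val_toUnits_apply {A M : Type*} [AddGroup A] [Monoid M] (ψ : AddChar A M) (a : A) :
    (ψ.toUnits a : M) = ψ a :=
  rfl

open Real

noncomputable def rotX : AddChar ℝ (Matrix (Fin 3) (Fin 3) ℝ) where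
  toFun θ := !![1, 0, 0; 0, cos θ, -sin θ; 0, sin θ, cos θ]
  map_zero_eq_one' := by simp [Matrix.one_fin_three]
  map_add_eq_mul' θ φ := by
    simp only [Matrix.mul_fin_three, cos_add, sin_add]
    ext i j; fin_cases i <;> fin_cases j <;> simp <;> ring

noncomputable def rotZ : AddChar ℝ (Matrix (Fin 3) (Fin 3) ℝ) where
  toFun θ := !![cos θ, -sin θ, 0; sin θ, cos θ, 0; 0, 0, 1]
  map_zero_eq_one' := by simp [Matrix.one_fin_three]
  map_add_eq_mul' θ φ := by
    simp only [Matrix.mul_fin_three, cos_add, sin_add]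
    ext i j; fin_cases i <;> fin_cases j <;> simp <;> ring

lemma rotX_pi_conj_rotZ (θ : ℝ) :
    rotX.toUnits π * rotZ.toUnits θ * (rotX.toUnits π)⁻¹ = (rotZ.toUnits θ)⁻¹ := by
  rw [mul_inv_eq_iff_eq_mul, ← AddChar.map_neg_eq_inv]
  exact Units.ext (by simp [rotX, rotZ])

lemma rotZ_pi_conj_rotX (θ : ℝ) :
    rotZ.toUnits π * rotX.toUnits θ * (rotZ.toUnits π)⁻¹ = (rotX.toUnits θ)⁻¹ := by
  rw [mul_inv_eq_iff_eq_mul, ← AddChar.map_neg_eq_inv]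
  exact Units.ext (by simp [rotX, rotZ])

lemma rotZ_two_pi : rotZ.toUnits (2 * π) = 1 :=
  Units.ext (by simp [rotZ, Matrix.one_fin_three])

lemma cos_eq_one_of_rotX_eq_one {θ : ℝ} (h : rotX θ = 1) : cos θ = 1 := by
  simpa [rotX] using congrFun (congrFun h 1) 1

lemma cos_eq_one_of_rotZ_eq_one {θ : ℝ} (h : rotZ θ = 1) : cos θ = 1 := by
  simpa [rotZ] using congrFun (congrFun h 0) 0

lemma cos_two_pi_div_ne_one {n : ℤ} (hn : n ≠ 0) (hn1 : n.natAbs ≠ 1) :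
    cos (2 * π / n) ≠ 1 := by
  intro h
  obtain ⟨k, hk⟩ := (cos_eq_one_iff _).mp h
  have hkn : n * k = 1 := by
    field_simp at hk
    rw [mul_comm]
    exact_mod_cast hk
  rcases Int.eq_one_or_neg_one_of_mul_eq_one hkn with rfl | rfl <;> exact hn1 rfl

theorem Gpq.hasGenTorsion {p q : ℤ} (hp : p ≠ 0) (hq : q ≠ 0)
    (h : p.natAbs ≠ 1 ∨ q.natAbs ≠ 1) :
    HasGenTorsion (Gpq p q) := by
  have hp' : (p : ℝ) ≠ 0 := Int.cast_ne_zero.mpr hp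
  have hq' : (q : ℝ) ≠ 0 := Int.cast_ne_zero.mpr hq
  have hpow (ψ : AddChar ℝ (Matrix (Fin 3) (Fin 3) ℝ)) (n : ℤ) (θ φ : ℝ)
      (hθ : n * θ = φ) :
      ψ.toUnits θ ^ n = ψ.toUnits φ := by
    rw [← AddChar.map_zsmul_eq_zpow, zsmul_eq_mul, hθ]
  apply Gpq.hasGenTorsion_of_conj_eq_inv (x := rotX.toUnits (π / (2 * p)))
    (z := rotZ.toUnits (π / (2 * q))) hp hq
  · rw [hpow rotX (2 * p) _ π (by push_cast; field_simp)]
    exact rotX_pi_conj_rotZ _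
  · rw [hpow rotZ (2 * q) _ π (by push_cast; field_simp)]
    exact rotZ_pi_conj_rotX _
  · rw [hpow rotZ (4 * q) _ (2 * π) (by push_cast; field_simp; ring)]
    exact rotZ_two_pi
  · rw [hpow rotX 4 _ (2 * π / p) (by push_cast; field_simp; ring),
      hpow rotZ 4 _ (2 * π / q) (by push_cast; field_simp; ring)]
    refine h.imp (fun hp1 h1 => ?_) (fun hq1 h1 => ?_)
    · exact cos_two_pi_div_ne_one hp hp1 (cos_eq_one_of_rotX_eq_one (congrArg Units.val h1))
    · exact cos_two_pi_div_ne_one hq hq1 (cos_eq_one_of_rotZ_eq_one (congrArg Units.val h1))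

lemma Int.eq_or_eq_neg_of_mul_eq_mul_of_natAbs_eq_one {p q p' q' : ℤ} (hpq : p * q = p' * q')
    (hp : p.natAbs = 1) (hq : q.natAbs = 1) : p = p' ∨ p = -p' := by
  have h : p'.natAbs * q'.natAbs = 1 := by rw [← Int.natAbs_mul, ← hpq, Int.natAbs_mul, hp, hq]
  rw [← Int.natAbs_eq_natAbs_iff, hp, Nat.eq_one_of_mul_eq_one_right h]

theorem hasGenTorsion_or_general (p q p' q' : ℤ) (hp : p ≠ 0) (hq : q ≠ 0)
    (hpq : p * q = p' * q')
    (h1 : p ≠ p') (h2 : p ≠ -p') :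
    HasGenTorsion (Gpq p q) ∨ HasGenTorsion (Gpq p' q') := by
  by_cases hunit : p.natAbs = 1 ∧ q.natAbs = 1
  · exact ((Int.eq_or_eq_neg_of_mul_eq_mul_of_natAbs_eq_one hpq hunit.1 hunit.2).elim h1 h2).elim
  · exact Or.inl (Gpq.hasGenTorsion hp hq (not_and_or.mp hunit))

/-- if `pq = p'\''q'\''` and `p ∉ {p'\'', -p'\'', q'\'', -q'\''}`, then at least one of
`G_{p,q}`, `G_{p'\'',q'\''}` admits a generalized torsion element. -/
theorem hasGenTorsion_or (p q p' q' : ℤ) (hp : p ≠ 0) (hq : q ≠ 0)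
    (hp' : p' ≠ 0) (hq' : q' ≠ 0) (hpq : p * q = p' * q')
    (h1 : p ≠ p') (h2 : p ≠ -p') (h3 : p ≠ q') (h4 : p ≠ -q') :
    HasGenTorsion (Gpq p q) ∨ HasGenTorsion (Gpq p' q') :=
  hasGenTorsion_or_general p q p' q' hp hq hpq h1 h2
end

section
/- Let G be a group, B and T elements of G, and n a nonnegative integer such that [B, T^{-k} B T^{k}] = 1 for every integer k with |k| ≤ n. Then for every nonnegative integer m with m ≤ n, the equation B T^{-1} B^{-1} T (B T)^{m} = (B T)^{m} T^{-m} B T^{-1} B^{-1} T^{m+1} holds in G. -/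
/-- if `[B, T^{-k} B T^k] = 1` for every integer `k` with `|k| ≤ n`, then
for every nonnegative `m ≤ n` one has
`B T⁻¹ B⁻¹ T (BT)^m = (BT)^m T^{-m} B T⁻¹ B⁻¹ T^{m+1}`. -/
theorem claim_in_commute_prop {G : Type*} [Group G] (B T : G) (n : ℕ)
    (hcomm : ∀ k : ℤ, |k| ≤ (n : ℤ) →
      B⁻¹ * (T ^ (-k) * B * T ^ k)⁻¹ * B * (T ^ (-k) * B * T ^ k) = 1) :
    ∀ m : ℕ, m ≤ n →
      B * T⁻¹ * B⁻¹ * T * (B * T) ^ m =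
        (B * T) ^ m * (T ^ (-(m : ℤ)) * B * T⁻¹ * B⁻¹ * T ^ ((m : ℤ) + 1)) := by
  have key : ∀ k : ℤ, |k| ≤ (n : ℤ) → Commute B (T ^ (-k) * B * T ^ k) := by
    intro k hk
    have h1 := hcomm k hk
    have h2 := congrArg (fun g => (T ^ (-k) * B * T ^ k) * B * g) h1
    simp only [mul_one] at h2
    rw [Commute, SemiconjBy]
    simpa [mul_assoc] using h2
  have step : ∀ k : ℤ, |k| ≤ (n : ℤ) → |k + 1| ≤ (n : ℤ) →
      (T ^ (-k) * B * T⁻¹ * B⁻¹ * T ^ (k + 1)) * (B * T) =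
        (B * T) * (T ^ (-(k + 1)) * B * T⁻¹ * B⁻¹ * T ^ (k + 2)) := by
    intro k hk hk1
    have c1 := key k hk
    have c2 := key (k + 1) hk1
    set X := T ^ (-k) * B * T ^ k with hXdef
    set Y := T ^ (-(k + 1)) * B * T ^ (k + 1) with hYdef
    set Z := T ^ (-(k + 2)) * B * T ^ (k + 2) with hZdef
    have hL : T ^ (-k) * B * T⁻¹ * B⁻¹ * T ^ (k + 1) = X * Y⁻¹ := by
      rw [hXdef, hYdef]; group
    have hR : T ^ (-(k + 1)) * B * T⁻¹ * B⁻¹ * T ^ (k + 2) = Y * Z⁻¹ := by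
      rw [hYdef, hZdef]; group
    rw [hL, hR]
    calc X * Y⁻¹ * (B * T) = X * (Y⁻¹ * B) * T := by group
      _ = X * (B * Y⁻¹) * T := by rw [(c2.inv_right.symm).eq]
      _ = (X * B) * (Y⁻¹ * T) := by group
      _ = (B * X) * (Y⁻¹ * T) := by rw [c1.symm.eq]
      _ = B * (X * Y⁻¹ * T) := by group
      _ = B * (T * (Y * Z⁻¹)) := by
          rw [hXdef, hYdef, hZdef]; group
      _ = B * T * (Y * Z⁻¹) := by group
  intro m hm
  induction m with
  | zero => group
  | succ m ih =>
    have hm' : m ≤ n := Nat.le_of_succ_le hm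
    have ihm := ih hm'
    have hk : |(m : ℤ)| ≤ (n : ℤ) := by
      rw [abs_of_nonneg (Int.natCast_nonneg m)]; exact_mod_cast hm'
    have hk1 : |(m : ℤ) + 1| ≤ (n : ℤ) := by
      rw [abs_of_nonneg (by positivity)]
      exact_mod_cast hm
    have hstep := step (m : ℤ) hk hk1
    have hcast : ((m + 1 : ℕ) : ℤ) = (m : ℤ) + 1 := by push_cast; ring
    rw [hcast, pow_succ]
    calc B * T⁻¹ * B⁻¹ * T * ((B * T) ^ m * (B * T))
        = (B * T⁻¹ * B⁻¹ * T * (B * T) ^ m) * (B * T) := by group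
      _ = (B * T) ^ m * ((T ^ (-(m : ℤ)) * B * T⁻¹ * B⁻¹ * T ^ ((m : ℤ) + 1)) * (B * T)) := by
          rw [ihm]; group
      _ = (B * T) ^ m * ((B * T) * (T ^ (-((m : ℤ) + 1)) * B * T⁻¹ * B⁻¹ * T ^ ((m : ℤ) + 2))) := by
          rw [hstep]
      _ = (B * T) ^ m * (B * T) * (T ^ (-((m : ℤ) + 1)) * B * T⁻¹ * B⁻¹ * T ^ ((m : ℤ) + 1 + 1)) := by
          rw [show (m : ℤ) + 2 = (m : ℤ) + 1 + 1 by ring]; group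
end

section
/- Let p and q be positive integers and suppose the group G_{p,q} admits no generalized torsion elements. Then the relation (t b^{pq} t^{-1}) · b^{-(2pq+1)} · (t^{-1} b^{pq} t) = 1 holds in G_{p,q}, where b and t denote the images of the generators. -/
/-- Conjugation commutes with integer powers. -/
lemma conj_zpow' {G : Type*} [Group G] (g x : G) (k : ℤ) :
    (g * x * g⁻¹) ^ k = g * x ^ k * g⁻¹ := by
  have h := map_zpow (MulAut.conj g) x k
  simp only [MulAut.conj_apply] at h
  exact h.symm

/-- Key telescoping lemma: in a group without generalized torsion, if `s ^ m` commutes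
with `B` for some `m > 0`, then the commutator `B⁻¹ * s * B * s⁻¹` is trivial.
Indeed, `∏_{k<m} s^k (B⁻¹ s B s⁻¹) s^{-k} = B⁻¹ s^m B s^{-m} = 1` exhibits `1` as a
product of conjugates of that commutator. -/
lemma comm_eq_one_of_pow_comm {G : Type*} [Group G] (hng : ¬ HasGenTorsion G)
    (B s : G) (m : ℕ) (hm : 0 < m) (hc : s ^ m * B = B * s ^ m) :
    B⁻¹ * s * B * s⁻¹ = 1 := by
  set d : G := B⁻¹ * s * B * s⁻¹ with hd
  by_contra hdne
  apply hng
  refine ⟨d, hdne, ?_⟩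
  have key : ∀ k : ℕ, B⁻¹ * s ^ (k + 1) * B * (s ^ (k + 1))⁻¹ ∈ ggP d := by
    intro k
    induction k with
    | zero =>
      have h : B⁻¹ * s ^ 1 * B * (s ^ 1)⁻¹ = d := by rw [hd]; group
      rw [h]
      exact Subsemigroup.subset_closure ⟨1, by group⟩
    | succ n ih =>
      have hsplit : B⁻¹ * s ^ (n + 1 + 1) * B * (s ^ (n + 1 + 1))⁻¹ =
          (B⁻¹ * s ^ (n + 1) * B * (s ^ (n + 1))⁻¹) * (s ^ (n + 1) * d * (s ^ (n + 1))⁻¹) := by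
        rw [hd]; group
      rw [hsplit]
      exact Subsemigroup.mul_mem _ ih
        (Subsemigroup.subset_closure ⟨(s ^ (n + 1))⁻¹, by group⟩)
  obtain ⟨k, rfl⟩ : ∃ k, m = k + 1 := ⟨m - 1, by omega⟩
  have h1 : B⁻¹ * s ^ (k + 1) * B * (s ^ (k + 1))⁻¹ = 1 := by
    calc B⁻¹ * s ^ (k + 1) * B * (s ^ (k + 1))⁻¹
        = B⁻¹ * (s ^ (k + 1) * B) * (s ^ (k + 1))⁻¹ := by group
      _ = B⁻¹ * (B * s ^ (k + 1)) * (s ^ (k + 1))⁻¹ := by rw [hc]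
      _ = 1 := by group
  exact h1 ▸ key k

/-- A small commutation identity used at the end. -/
lemma final_identity {G : Type*} [Group G] (A b C : G)
    (hAC : Commute A C) (hbC : Commute b C) :
    (A⁻¹ * b * C) * (C⁻¹ * C⁻¹ * b⁻¹) * (A * C) = 1 := by
  have h1 : b * C⁻¹ = C⁻¹ * b := hbC.inv_right.eq
  have h2 : C⁻¹ * A = A * C⁻¹ := hAC.inv_right.eq.symm
  calc (A⁻¹ * b * C) * (C⁻¹ * C⁻¹ * b⁻¹) * (A * C)
      = A⁻¹ * (b * C⁻¹) * b⁻¹ * A * C := by group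
    _ = A⁻¹ * (C⁻¹ * b) * b⁻¹ * A * C := by rw [h1]
    _ = A⁻¹ * (C⁻¹ * A) * C := by group
    _ = A⁻¹ * (A * C⁻¹) * C := by rw [h2]
    _ = 1 := by group

/-- if `p, q > 0` and `G_{p,q}` has no generalized torsion elements, then
`(t b^{pq} t⁻¹) b^{-(2pq+1)} (t⁻¹ b^{pq} t) = 1` in `G_{p,q}`. -/
theorem characteristic_relation (p q : ℤ) (hp : 0 < p) (hq : 0 < q)
    (hng : ¬ HasGenTorsion (Gpq p q)) :
    letI b : Gpq p q := PresentedGroup.of 1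
    letI t : Gpq p q := PresentedGroup.of 2
    (t * b ^ (p * q) * t⁻¹) * b ^ (-(2 * p * q + 1)) * (t⁻¹ * b ^ (p * q) * t) = 1 := by
  show ((PresentedGroup.of 2 : Gpq p q) * (PresentedGroup.of 1 : Gpq p q) ^ (p * q) *
      (PresentedGroup.of 2 : Gpq p q)⁻¹) * (PresentedGroup.of 1 : Gpq p q) ^ (-(2 * p * q + 1)) *
      ((PresentedGroup.of 2 : Gpq p q)⁻¹ * (PresentedGroup.of 1 : Gpq p q) ^ (p * q) *
      (PresentedGroup.of 2 : Gpq p q)) = 1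
  set a : Gpq p q := PresentedGroup.of 0 with ha
  set b : Gpq p q := PresentedGroup.of 1 with hb
  set t : Gpq p q := PresentedGroup.of 2 with ht
  -- the relators hold in the presented group
  have hrel : ∀ r ∈ gpqRels p q, PresentedGroup.mk (gpqRels p q) r = 1 := by
    intro r hr
    exact (QuotientGroup.eq_one_iff r).mpr (Subgroup.subset_normalClosure hr)
  have hofa : PresentedGroup.mk (gpqRels p q) (FreeGroup.of 0) = a := rfl
  have hofb : PresentedGroup.mk (gpqRels p q) (FreeGroup.of 1) = b := rfl
  have hoft : PresentedGroup.mk (gpqRels p q) (FreeGroup.of 2) = t := rfl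
  have mem1 : (FreeGroup.of 2 * FreeGroup.of 0 ^ p * (FreeGroup.of 2)⁻¹ *
      ((FreeGroup.of 1)⁻¹ * FreeGroup.of 0 ^ p)⁻¹ : FreeGroup (Fin 3)) ∈ gpqRels p q := by
    simp [gpqRels]
  have mem2 : (FreeGroup.of 2 * FreeGroup.of 1 ^ (-q) * (FreeGroup.of 0)⁻¹ * (FreeGroup.of 2)⁻¹ *
      (FreeGroup.of 1 ^ (-q))⁻¹ : FreeGroup (Fin 3)) ∈ gpqRels p q := by
    simp [gpqRels]
  have mem3 : ((FreeGroup.of 1 ^ q)⁻¹ * (FreeGroup.of 0 ^ p)⁻¹ * FreeGroup.of 1 ^ q *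
      FreeGroup.of 0 ^ p : FreeGroup (Fin 3)) ∈ gpqRels p q := by
    simp [gpqRels]
  have h1 : t * a ^ p * t⁻¹ = b⁻¹ * a ^ p := by
    have h := hrel _ mem1
    simp only [map_mul, map_zpow, map_inv, hofa, hofb, hoft] at h
    rw [mul_inv_eq_one] at h
    exact h
  have h2 : t * b ^ (-q) * a⁻¹ * t⁻¹ = b ^ (-q) := by
    have h := hrel _ mem2
    simp only [map_mul, map_zpow, map_inv, hofa, hofb, hoft] at h
    rw [mul_inv_eq_one] at h
    exact h
  have h3 : b ^ q * a ^ p = a ^ p * b ^ q := by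
    have h := hrel _ mem3
    simp only [map_mul, map_zpow, map_inv, hofa, hofb, hoft] at h
    calc b ^ q * a ^ p
        = (a ^ p * b ^ q) * ((b ^ q)⁻¹ * (a ^ p)⁻¹ * b ^ q * a ^ p) := by group
      _ = (a ^ p * b ^ q) * 1 := by rw [h]
      _ = a ^ p * b ^ q := mul_one _
  -- abbreviations
  set A : Gpq p q := a ^ p with hA
  set B : Gpq p q := b ^ q with hB
  set v : Gpq p q := t * B * t⁻¹ with hv
  set u : Gpq p q := t⁻¹ * B * t with hu
  -- u = a * B
  have huaB : u = a * B := by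
    have h2' : t * B⁻¹ * a⁻¹ * t⁻¹ = B⁻¹ := by
      have hq' : b ^ (-q) = B⁻¹ := by rw [hB, zpow_neg]
      rw [← hq']; exact h2
    have h2'' : t * B⁻¹ * a⁻¹ * t⁻¹ * B = 1 := by rw [h2']; group
    have h2''' : B⁻¹ * a⁻¹ * (t⁻¹ * B * t) = 1 := by
      calc B⁻¹ * a⁻¹ * (t⁻¹ * B * t)
          = t⁻¹ * (t * B⁻¹ * a⁻¹ * t⁻¹ * B) * t := by group
        _ = t⁻¹ * 1 * t := by rw [h2'']
        _ = 1 := by group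
    rw [hu]
    calc t⁻¹ * B * t
        = (a * B) * (B⁻¹ * a⁻¹ * (t⁻¹ * B * t)) := by group
      _ = (a * B) * 1 := by rw [h2''']
      _ = a * B := mul_one _
  -- t a t⁻¹ = B v⁻¹
  have htat : t * a * t⁻¹ = B * v⁻¹ := by
    have haub : a = u * B⁻¹ := by rw [huaB]; group
    rw [haub, hu, hv]
    group
  -- (B v⁻¹)^p = b⁻¹ A
  have hBv : (B * v⁻¹) ^ p = b⁻¹ * A := by
    rw [← htat, conj_zpow']
    exact h1
  -- commutation facts
  have hAB : Commute A B := by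
    rw [hA, hB]; exact h3.symm
  have hbB : Commute b B := by
    rw [hB]; exact (Commute.refl b).zpow_right q
  have hDB : (b⁻¹ * A) * B = B * (b⁻¹ * A) := ((hbB.inv_left).mul_left hAB).eq
  -- apply the key lemma with s = B * v⁻¹, m = p.toNat
  have hspB : (B * v⁻¹) ^ (p.toNat) * B = B * (B * v⁻¹) ^ (p.toNat) := by
    have hnat : ((B * v⁻¹ : Gpq p q)) ^ (p.toNat) = (B * v⁻¹) ^ p := by
      rw [← zpow_natCast, Int.toNat_of_nonneg hp.le]
    rw [hnat, hBv]
    exact hDB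
  have hd1 : B⁻¹ * (B * v⁻¹) * B * (B * v⁻¹)⁻¹ = 1 :=
    comm_eq_one_of_pow_comm hng B (B * v⁻¹) p.toNat (by omega) hspB
  -- hence B and v commute
  have hvB : v * B = B * v := by
    have h' : v⁻¹ * B * v = B := by
      have h'' : v⁻¹ * B * v * B⁻¹ = 1 := by
        calc v⁻¹ * B * v * B⁻¹
            = B⁻¹ * (B * v⁻¹) * B * (B * v⁻¹)⁻¹ := by group
          _ = 1 := hd1
      calc v⁻¹ * B * v = (v⁻¹ * B * v * B⁻¹) * B := by group
        _ = 1 * B := by rw [h'']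
        _ = B := one_mul B
    calc v * B = v * (v⁻¹ * B * v) := by rw [h']
      _ = B * v := by group
  -- u commutes with B
  have huB : u * B = B * u := by
    have hvt : t⁻¹ * v * t = B := by rw [hv]; group
    calc u * B = (t⁻¹ * B * t) * (t⁻¹ * v * t) := by rw [hvt, hu]
      _ = t⁻¹ * (B * v) * t := by group
      _ = t⁻¹ * (v * B) * t := by rw [hvB]
      _ = (t⁻¹ * v * t) * (t⁻¹ * B * t) := by group
      _ = B * u := by rw [hvt, ← hu]
  -- u ^ p = A * B ^ p
  have hup : u ^ p = A * B ^ p := by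
    have hco : Commute u B := huB
    have haub : a = u * B⁻¹ := by rw [huaB]; group
    have hX : A = u ^ p * (B ^ p)⁻¹ := by
      rw [hA, haub, (hco.inv_right).mul_zpow, inv_zpow]
    rw [hX]; group
  -- v ^ p = A⁻¹ * b * B ^ p
  have hvp : v ^ p = A⁻¹ * b * B ^ p := by
    have hco2 : Commute B v⁻¹ := Commute.inv_right (hvB.symm : Commute B v)
    have hY : B ^ p * (v ^ p)⁻¹ = b⁻¹ * A := by
      calc B ^ p * (v ^ p)⁻¹ = B ^ p * (v⁻¹) ^ p := by rw [inv_zpow]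
        _ = (B * v⁻¹) ^ p := (hco2.mul_zpow p).symm
        _ = b⁻¹ * A := hBv
    calc v ^ p = (B ^ p * (v ^ p)⁻¹)⁻¹ * B ^ p := by group
      _ = (b⁻¹ * A)⁻¹ * B ^ p := by rw [hY]
      _ = A⁻¹ * b * B ^ p := by group
  -- final assembly
  have hbpq : b ^ (p * q) = B ^ p := by
    rw [hB, ← zpow_mul, mul_comm q p]
  have h5 : t * B ^ p * t⁻¹ = v ^ p := by
    rw [hv, conj_zpow']
  have h6 : t⁻¹ * B ^ p * t = u ^ p := by
    have h := conj_zpow' t⁻¹ B p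
    rw [inv_inv] at h
    rw [hu, h]
  have h7 : b ^ (-(2 * p * q + 1)) = (B ^ p)⁻¹ * (B ^ p)⁻¹ * b⁻¹ := by
    have he : (-(2 * p * q + 1)) = (-(p * q)) + (-(p * q)) + (-1) := by ring
    rw [he, zpow_add, zpow_add, zpow_neg, zpow_neg, hbpq, zpow_one]
  rw [hbpq, h7, h5, h6, hvp, hup]
  exact final_identity A b (B ^ p) (hAB.zpow_right p) (hbB.zpow_right p)
end

section
/- Let p and q be positive integers, and let ρ : H_{p,q} → ℤ be the group homomorphism determined by ρ(τ) = 1 and ρ(x_n) = 0 for all n ∈ ℤ. Then the kernel of ρ is isomorphic to the group with presentation < x_n (n ∈ ℤ) | [x_i, x_j] = 1, x_{i+1}^{pq} x_i^{-(2pq+1)} x_{i-1}^{pq} = 1 (i, j ∈ ℤ) >, via a map sending each generator x_n of the latter group to the element x_n of H_{p,q}. -/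
/-!
`H_{p,q}` is the mapping torus of the shift automorphism `x_n ↦ x_{n+1}` of
`K = < x_n | [x_i, x_j], x_{i+1}^{pq} x_i^{-(2pq+1)} x_{i-1}^{pq} >`, which exists because the
relators of `K` are permuted by the shift. Its presentation is that of `K` plus one generator `τ`
conjugating `x_i` to `x_{i+1}`, which is exactly a presentation of `K ⋊ ℤ`: the maps both ways
are defined on generators and are mutually inverse. Under this isomorphism `ρ` becomes the
projection `K ⋊ ℤ → ℤ`, whose kernel is `K`.
-/

/-- The relators of the presentation
`< τ, x_n (n ∈ ℤ) | [x_i, x_j] = 1, x_{i+1}^{pq} x_i^{-(2pq+1)} x_{i-1}^{pq} = 1,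
τ x_i τ⁻¹ = x_{i+1} >`, where `τ` is the generator `Sum.inl ()` and `x_n` is the
generator `Sum.inr n`, and `[g,h] = g⁻¹ h⁻¹ g h`. -/
def hpqRels (p q : ℤ) : Set (FreeGroup (Unit ⊕ ℤ)) :=
  let τ : FreeGroup (Unit ⊕ ℤ) := FreeGroup.of (Sum.inl ())
  let X : ℤ → FreeGroup (Unit ⊕ ℤ) := fun n => FreeGroup.of (Sum.inr n)
  (⋃ i : ℤ, ⋃ j : ℤ, {(X i)⁻¹ * (X j)⁻¹ * X i * X j}) ∪
    (⋃ i : ℤ, {(X (i + 1)) ^ (p * q) * (X i) ^ (-(2 * p * q + 1)) * (X (i - 1)) ^ (p * q)}) ∪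
    (⋃ i : ℤ, {τ * X i * τ⁻¹ * (X (i + 1))⁻¹})

/-- The group `H_{p,q}`. -/
abbrev Hpq (p q : ℤ) := PresentedGroup (hpqRels p q)

/-- The relators of the presentation
`< x_n (n ∈ ℤ) | [x_i, x_j] = 1, x_{i+1}^{pq} x_i^{-(2pq+1)} x_{i-1}^{pq} = 1 >`,
where `x_n` is the generator `n`. -/
def kerRels (p q : ℤ) : Set (FreeGroup ℤ) :=
  let X : ℤ → FreeGroup ℤ := fun n => FreeGroup.of n
  (⋃ i : ℤ, ⋃ j : ℤ, {(X i)⁻¹ * (X j)⁻¹ * X i * X j}) ∪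
    (⋃ i : ℤ, {(X (i + 1)) ^ (p * q) * (X i) ^ (-(2 * p * q + 1)) * (X (i - 1)) ^ (p * q)})

lemma MulAut.zpow_apply_eq_of_apply_eq_add_one {G : Type*} [Group G] {f : MulAut G} {x : ℤ → G}
    (h : ∀ i, f (x i) = x (i + 1)) (m i : ℤ) : (f ^ m) (x i) = x (i + m) := by
  induction m using Int.induction_on generalizing i with
  | zero => simp
  | succ k ih => rw [zpow_add_one, MulAut.mul_apply, h, ih, add_right_comm, add_assoc]
  | pred k ih =>
    have hinv : f⁻¹ (x i) = x (i - 1) := by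
      rw [MulAut.inv_apply, MulEquiv.symm_apply_eq, h, sub_add_cancel]
    rw [zpow_sub_one, MulAut.mul_apply, hinv, ih]
    ring_nf

def mappingTorusRels (rels : Set (FreeGroup ℤ)) : Set (FreeGroup (Unit ⊕ ℤ)) :=
  FreeGroup.map Sum.inr '' rels ∪
    ⋃ i : ℤ, {.of (.inl ()) * .of (.inr i) * (.of (.inl ()))⁻¹ * (.of (.inr (i + 1)))⁻¹}

namespace MappingTorus

variable {rels : Set (FreeGroup ℤ)}
  (hrels : ∀ c : ℤ, Set.MapsTo (FreeGroup.map (· + c)) rels rels)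

def shift (c : ℤ) : PresentedGroup rels →* PresentedGroup rels :=
  PresentedGroup.map (FreeGroup.map (· + c)) (hrels c)

@[simp] lemma shift_of (c n : ℤ) : shift hrels c (.of n) = .of (n + c) := rfl

lemma shift_comp_shift (a b : ℤ) : (shift hrels a).comp (shift hrels b) = shift hrels (b + a) :=
  PresentedGroup.ext fun n => by simp [add_assoc]

lemma shift_zero : shift hrels 0 = MonoidHom.id _ :=
  PresentedGroup.ext fun n => by simp

def shiftAction : Multiplicative ℤ →* MulAut (PresentedGroup rels) where
  toFun t := (shift hrels t.toAdd).toMulEquiv (shift hrels (-t.toAdd))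
    (by rw [shift_comp_shift, add_neg_cancel, shift_zero])
    (by rw [shift_comp_shift, neg_add_cancel, shift_zero])
  map_one' := MulEquiv.toMonoidHom_injective (shift_zero hrels)
  map_mul' a b := MulEquiv.toMonoidHom_injective <| by
    change shift hrels (a.toAdd + b.toAdd) = (shift hrels a.toAdd).comp (shift hrels b.toAdd)
    rw [shift_comp_shift, add_comm]

@[simp] lemma shiftAction_apply_of (t : Multiplicative ℤ) (n : ℤ) :
    shiftAction hrels t (.of n) = .of (n + t.toAdd) := rfl

abbrev τ : PresentedGroup (mappingTorusRels rels) := .of (.inl ())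

lemma conj_tau_of_inr (i : ℤ) :
    MulAut.conj τ (.of (.inr i)) = (.of (.inr (i + 1)) : PresentedGroup (mappingTorusRels rels)) :=
  mul_inv_eq_one.mp <| PresentedGroup.one_of_mem <| Or.inr <| Set.mem_iUnion.mpr ⟨i, rfl⟩

def incl : PresentedGroup rels →* PresentedGroup (mappingTorusRels rels) :=
  PresentedGroup.map (FreeGroup.map Sum.inr) fun r hr => Or.inl ⟨r, hr, rfl⟩

@[simp] lemma incl_of (n : ℤ) : incl (.of n : PresentedGroup rels) = .of (.inr n) := rfl

lemma incl_comp_shiftAction (t : Multiplicative ℤ) :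
    incl.comp (shiftAction hrels t).toMonoidHom =
      (MulAut.conj (τ ^ t.toAdd)).toMonoidHom.comp incl :=
  PresentedGroup.ext fun n => by
    simp [MulAut.zpow_apply_eq_of_apply_eq_add_one conj_tau_of_inr]

def ofSemidirectProduct :
    PresentedGroup rels ⋊[shiftAction hrels] Multiplicative ℤ →*
      PresentedGroup (mappingTorusRels rels) :=
  SemidirectProduct.lift incl (zpowersHom _ τ) (incl_comp_shiftAction hrels)

def toSemidirectProduct :
    PresentedGroup (mappingTorusRels rels) →*
      PresentedGroup rels ⋊[shiftAction hrels] Multiplicative ℤ :=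
  PresentedGroup.toGroup (f := Sum.elim (fun _ => .inr (.ofAdd 1)) (fun n => .inl (.of n))) <| by
    rintro r (⟨r, hr, rfl⟩ | hr)
    · calc FreeGroup.lift _ (FreeGroup.map Sum.inr r)
          = SemidirectProduct.inl (PresentedGroup.mk rels r) :=
            DFunLike.congr_fun (FreeGroup.ext_hom ((FreeGroup.lift _).comp (FreeGroup.map Sum.inr))
              (SemidirectProduct.inl.comp (PresentedGroup.mk rels)) fun _ => rfl) r
        _ = 1 := by rw [PresentedGroup.one_of_mem hr, map_one]
    · obtain ⟨i, rfl⟩ := Set.mem_iUnion.mp hr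
      simp only [map_mul, map_inv, mul_inv_eq_one, FreeGroup.lift_apply_of, Sum.elim_inl,
        Sum.elim_inr]
      exact (SemidirectProduct.inl_aut _ _).symm

def mulEquivSemidirectProduct :
    PresentedGroup (mappingTorusRels rels) ≃*
      PresentedGroup rels ⋊[shiftAction hrels] Multiplicative ℤ :=
  (toSemidirectProduct hrels).toMulEquiv (ofSemidirectProduct hrels)
    (PresentedGroup.ext <| by rintro (⟨⟩ | n) <;> rfl)
    (SemidirectProduct.hom_ext (PresentedGroup.ext fun n => rfl) (MonoidHom.ext_mint rfl))

@[simp] lemma mulEquivSemidirectProduct_incl (k : PresentedGroup rels) :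
    mulEquivSemidirectProduct hrels (incl k) = .inl k :=
  DFunLike.congr_fun (PresentedGroup.ext (φ := (toSemidirectProduct hrels).comp incl)
    (ψ := SemidirectProduct.inl) fun _ => rfl) k

lemma incl_injective (hrels : ∀ c : ℤ, Set.MapsTo (FreeGroup.map (· + c)) rels rels) :
    Function.Injective (incl : PresentedGroup rels →* _) := fun a b h => by
  simpa using congrArg (mulEquivSemidirectProduct hrels) h

lemma ker_eq_range_incl (hrels : ∀ c : ℤ, Set.MapsTo (FreeGroup.map (· + c)) rels rels)
    (ρ : PresentedGroup (mappingTorusRels rels) →* Multiplicative ℤ)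
    (hτ : ρ τ = .ofAdd 1) (hx : ∀ n : ℤ, ρ (.of (.inr n)) = 1) : ρ.ker = incl.range := by
  have hρ : ∀ g, ρ g = (mulEquivSemidirectProduct hrels g).right := by
    refine DFunLike.congr_fun (PresentedGroup.ext (φ := ρ)
      (ψ := SemidirectProduct.rightHom.comp (mulEquivSemidirectProduct hrels).toMonoidHom) ?_)
    rintro (_ | n)
    · exact hτ
    · simpa [← incl_of] using hx n
  ext g
  constructor
  · intro hg
    refine ⟨(mulEquivSemidirectProduct hrels g).left,
      (mulEquivSemidirectProduct hrels).injective ?_⟩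
    ext : 1
    · simp
    · simpa [hρ, eq_comm] using hg
  · rintro ⟨k, rfl⟩
    simp [MonoidHom.mem_ker, hρ]

theorem exists_mulEquiv_ker (hrels : ∀ c : ℤ, Set.MapsTo (FreeGroup.map (· + c)) rels rels)
    (ρ : PresentedGroup (mappingTorusRels rels) →* Multiplicative ℤ)
    (hτ : ρ τ = .ofAdd 1) (hx : ∀ n : ℤ, ρ (.of (.inr n)) = 1) :
    ∃ φ : PresentedGroup rels ≃* ρ.ker,
      ∀ n : ℤ, (φ (.of n) : PresentedGroup (mappingTorusRels rels)) = .of (.inr n) :=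
  ⟨(MonoidHom.ofInjective (incl_injective hrels)).trans
    (MulEquiv.subgroupCongr (ker_eq_range_incl hrels ρ hτ hx).symm), fun _ => rfl⟩

end MappingTorus

lemma kerRels_mapsTo_shift (p q c : ℤ) :
    Set.MapsTo (FreeGroup.map (· + c)) (kerRels p q) (kerRels p q) := by
  rintro _ (⟨_, ⟨i, rfl⟩, _, ⟨j, rfl⟩, rfl⟩ | ⟨_, ⟨i, rfl⟩, rfl⟩)
  · exact Or.inl ⟨_, ⟨i + c, rfl⟩, _, ⟨j + c, rfl⟩, by simp⟩
  · exact Or.inr ⟨_, ⟨i + c, rfl⟩, by simp [add_right_comm, sub_add_eq_add_sub]⟩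

lemma hpqRels_eq_mappingTorusRels (p q : ℤ) : hpqRels p q = mappingTorusRels (kerRels p q) := by
  simp only [hpqRels, kerRels, mappingTorusRels, Set.image_union, Set.image_iUnion,
    Set.image_singleton, map_mul, map_inv, map_zpow, FreeGroup.map.of]

theorem ker_rho_presentation_general (p q : ℤ)
    (ρ : Hpq p q →* Multiplicative ℤ)
    (hτ : ρ (PresentedGroup.of (Sum.inl ())) = Multiplicative.ofAdd 1)
    (hx : ∀ n : ℤ, ρ (PresentedGroup.of (Sum.inr n)) = 1) :
    ∃ φ : PresentedGroup (kerRels p q) ≃* ρ.ker,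
      ∀ n : ℤ, ((φ (PresentedGroup.of n) : ρ.ker) : Hpq p q) =
        PresentedGroup.of (Sum.inr n) := by
  revert ρ
  unfold Hpq
  rw [hpqRels_eq_mappingTorusRels]
  exact MappingTorus.exists_mulEquiv_ker (kerRels_mapsTo_shift p q)

/-- the kernel of the homomorphism `ρ : H_{p,q} → ℤ` with `ρ(τ) = 1` and
`ρ(x_n) = 0` is isomorphic to the group presented by
`< x_n (n ∈ ℤ) | [x_i, x_j] = 1, x_{i+1}^{pq} x_i^{-(2pq+1)} x_{i-1}^{pq} = 1 >`,
via a map sending each generator `x_n` to the element `x_n` of `H_{p,q}`. -/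
theorem ker_rho_presentation (p q : ℤ) (hp : 0 < p) (hq : 0 < q)
    (ρ : Hpq p q →* Multiplicative ℤ)
    (hτ : ρ (PresentedGroup.of (Sum.inl ())) = Multiplicative.ofAdd 1)
    (hx : ∀ n : ℤ, ρ (PresentedGroup.of (Sum.inr n)) = 1) :
    ∃ φ : PresentedGroup (kerRels p q) ≃* ρ.ker,
      ∀ n : ℤ, ((φ (PresentedGroup.of n) : ρ.ker) : Hpq p q) =
        PresentedGroup.of (Sum.inr n) :=
  ker_rho_presentation_general p q ρ hτ hx
end

section
/- Let p and q be positive integers. Then the group K_{p,q} is bi-orderable. -/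
/-!
For `p, q > 0` the matrix `A` has determinant `1` and trace `2 + 1/(pq) > 2`, so its eigenvalues
are `λ` and `λ⁻¹` for some `λ > 1`. In coordinates along the two left eigenvectors, `ℝ²` becomes
the ordered group `ℝ ×ₗ ℝ` and `A` multiplies the coordinates by `λ` and `λ⁻¹`, so it preserves
the order. A semidirect product of bi-ordered groups whose action preserves the order is
bi-ordered by the lexicographic order with the acting group first.
-/

/-- `G` is bi-orderable: it admits a strict total order invariant under left and right
multiplication. -/
def IsBiOrderable (G : Type*) [Group G] : Prop :=
  ∃ r : G → G → Prop, IsStrictTotalOrder G r ∧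
    ∀ a b g h : G, r g h → r (a * g * b) (a * h * b)

noncomputable section

/-- The matrix `A` with rows `(1, -1/q)` and `(-1/p, 1 + 1/(pq))`. -/
def Amat (p q : ℤ) : Matrix (Fin 2) (Fin 2) ℝ :=
  !![1, -1 / (q : ℝ); -1 / (p : ℝ), 1 + 1 / ((p : ℝ) * (q : ℝ))]

/-- The inverse of `Amat` (its adjugate; `Amat` has determinant 1). -/
def Bmat (p q : ℤ) : Matrix (Fin 2) (Fin 2) ℝ :=
  !![1 + 1 / ((p : ℝ) * (q : ℝ)), 1 / (q : ℝ); 1 / (p : ℝ), 1]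

theorem Amat_mul_Bmat (p q : ℤ) (hp : p ≠ 0) (hq : q ≠ 0) :
    Amat p q * Bmat p q = 1 := by
  have hp' : (p : ℝ) ≠ 0 := Int.cast_ne_zero.mpr hp
  have hq' : (q : ℝ) ≠ 0 := Int.cast_ne_zero.mpr hq
  ext i j
  fin_cases i <;> fin_cases j <;>
    simp [Amat, Bmat, Matrix.mul_apply, Fin.sum_univ_two, Matrix.one_apply] <;>
    field_simp <;> ring

theorem Bmat_mul_Amat (p q : ℤ) (hp : p ≠ 0) (hq : q ≠ 0) :
    Bmat p q * Amat p q = 1 := by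
  have hp' : (p : ℝ) ≠ 0 := Int.cast_ne_zero.mpr hp
  have hq' : (q : ℝ) ≠ 0 := Int.cast_ne_zero.mpr hq
  ext i j
  fin_cases i <;> fin_cases j <;>
    simp [Amat, Bmat, Matrix.mul_apply, Fin.sum_univ_two, Matrix.one_apply] <;>
    field_simp <;> ring

/-- The automorphism of `ℝ²` (written multiplicatively) given by `v ↦ A v`. -/
def alphaAut (p q : ℤ) (hp : p ≠ 0) (hq : q ≠ 0) :
    MulAut (Multiplicative (Fin 2 → ℝ)) where
  toFun v := Multiplicative.ofAdd ((Amat p q).mulVec v.toAdd)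
  invFun v := Multiplicative.ofAdd ((Bmat p q).mulVec v.toAdd)
  left_inv v := by
    change Multiplicative.ofAdd ((Bmat p q).mulVec ((Amat p q).mulVec v.toAdd)) = v
    rw [Matrix.mulVec_mulVec, Bmat_mul_Amat p q hp hq, Matrix.one_mulVec]; rfl
  right_inv v := by
    change Multiplicative.ofAdd ((Amat p q).mulVec ((Bmat p q).mulVec v.toAdd)) = v
    rw [Matrix.mulVec_mulVec, Amat_mul_Bmat p q hp hq, Matrix.one_mulVec]; rfl
  map_mul' u v := by
    simp only [toAdd_mul, Matrix.mulVec_add, ofAdd_add]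

/-- `K_{p,q} = ℝ² ⋊ ℤ`: the semidirect product with underlying set `ℝ² × ℤ` and product
`(v₁, n₁) • (v₂, n₂) = (v₁ + A^{n₁} v₂, n₁ + n₂)` (the element `n : ℤ` acts on `ℝ²` by
the `n`-th power of the automorphism `v ↦ A v`). -/
abbrev Kpq (p q : ℤ) (hp : p ≠ 0) (hq : q ≠ 0) :=
  SemidirectProduct (Multiplicative (Fin 2 → ℝ)) (Multiplicative ℤ)
    (zpowersHom (MulAut (Multiplicative (Fin 2 → ℝ))) (alphaAut p q hp hq))

open Function
open scoped Matrix

section BiOrder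

variable {G : Type*} [Group G]

def IsBiOrder (r : G → G → Prop) : Prop :=
  IsStrictTotalOrder G r ∧ ∀ a b g h : G, r g h → r (a * g * b) (a * h * b)

theorem IsBiOrder.mul_left {r : G → G → Prop} (hr : IsBiOrder r) (a : G) {g h : G} (hgh : r g h) :
    r (a * g) (a * h) := by
  simpa using hr.2 a 1 g h hgh

theorem IsBiOrder.mul_right {r : G → G → Prop} (hr : IsBiOrder r) (b : G) {g h : G}
    (hgh : r g h) : r (g * b) (h * b) := by
  simpa using hr.2 1 b g h hgh

theorem isBiOrder_lt_onFun {Γ : Type*} [AddCommGroup Γ] [LinearOrder Γ] [IsOrderedAddMonoid Γ]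
    (f : G → Γ) (hf : Injective f) (hmul : ∀ x y, f (x * y) = f x + f y) :
    IsBiOrder ((· < ·) on f) := by
  refine ⟨hf.isStrictTotalOrder_onFun _, fun a b g h hgh => ?_⟩
  simp only [onFun, hmul] at hgh ⊢
  gcongr

end BiOrder

theorem SemidirectProduct.isBiOrderable {N G : Type*} [Group N] [Group G] {φ : G →* MulAut N}
    {r : N → N → Prop} {s : G → G → Prop} (hr : IsBiOrder r) (hs : IsBiOrder s)
    (hφ : ∀ g x y, r x y → r (φ g x) (φ g y)) : IsBiOrderable (N ⋊[φ] G) := by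
  have := hr.1
  have := hs.1
  have : IsStrictTotalOrder (G × N) (Prod.Lex s r) := {}
  have hinj : Injective fun x : N ⋊[φ] G => (x.right, x.left) := fun x y hxy => by
    ext
    exacts [congrArg Prod.snd hxy, congrArg Prod.fst hxy]
  refine ⟨Prod.Lex s r on fun x => (x.right, x.left), hinj.isStrictTotalOrder_onFun _, ?_⟩
  intro a b g h hgh
  simp only [onFun, Prod.lex_iff, mul_assoc a, mul_left, mul_right] at hgh ⊢
  rcases hgh with hlt | ⟨heq, hlt⟩
  · exact Or.inl (by simpa only [mul_assoc] using hs.2 a.right b.right _ _ hlt)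
  · refine Or.inr ⟨by rw [heq], hr.mul_left _ (hφ _ _ _ ?_)⟩
    rw [heq]
    exact hr.mul_right _ hlt

theorem MulAut.apply_zpow_of_apply {N K : Type*} [Group N] [GroupWithZero K] {σ : MulAut N}
    {χ : N → K} {l : K} (hl : l ≠ 0) (hχ : ∀ x, χ (σ x) = l * χ x) (n : ℤ) (x : N) :
    χ ((σ ^ n) x) = l ^ n * χ x := by
  have hχ_inv : ∀ x, χ (σ⁻¹ x) = l⁻¹ * χ x := fun x => by
    rw [eq_inv_mul_iff_mul_eq₀ hl, ← hχ, MulAut.apply_inv_self]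
  induction n using Int.induction_on generalizing x with
  | zero => simp
  | succ k ih => rw [zpow_add_one, MulAut.mul_apply, ih, hχ, zpow_add_one₀ hl, mul_assoc]
  | pred k ih => rw [zpow_sub_one, MulAut.mul_apply, ih, hχ_inv, zpow_sub_one₀ hl, mul_assoc]

theorem Prod.Lex.toLex_map_lt_toLex_map {α β γ δ : Type*} [Preorder α] [Preorder β]
    [Preorder γ] [Preorder δ] {f : α → γ} {g : β → δ} (hf : StrictMono f) (hg : StrictMono g)
    {x y : α × β} (hxy : toLex x < toLex y) : toLex (Prod.map f g x) < toLex (Prod.map f g y) := by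
  rw [Prod.Lex.toLex_lt_toLex] at hxy ⊢
  rcases hxy with hlt | ⟨heq, hlt⟩
  · exact Or.inl (hf hlt)
  · exact Or.inr ⟨congrArg f heq, hg hlt⟩

theorem exists_one_lt_add_inv_eq {t : ℝ} (ht : 2 < t) : ∃ l : ℝ, 1 < l ∧ l + l⁻¹ = t := by
  have hs : √(t ^ 2 - 4) ^ 2 = t ^ 2 - 4 := Real.sq_sqrt (by nlinarith)
  have hs0 : 0 ≤ √(t ^ 2 - 4) := Real.sqrt_nonneg _
  refine ⟨(t + √(t ^ 2 - 4)) / 2, by linarith, ?_⟩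
  have : t + √(t ^ 2 - 4) ≠ 0 := by linarith
  field_simp
  linear_combination hs

theorem injective_dotProduct_pair {a b : ℝ} (hab : a ≠ b) :
    Injective fun v : Fin 2 → ℝ => (![1, a] ⬝ᵥ v, ![1, b] ⬝ᵥ v) := by
  intro u v huv
  simp only [Prod.mk.injEq, dotProduct, Fin.sum_univ_two, Matrix.cons_val_zero,
    Matrix.cons_val_one] at huv
  obtain ⟨h₀, h₁⟩ := huv
  have hv₁ : u 1 = v 1 := mul_left_cancel₀ (sub_ne_zero.mpr hab) (by linear_combination h₀ - h₁)
  have hv₀ : u 0 = v 0 := by linear_combination h₀ - a * hv₁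
  ext i
  fin_cases i
  exacts [hv₀, hv₁]

def leftEigenvector (p : ℤ) (l : ℝ) : Fin 2 → ℝ := ![1, p * (1 - l)]

/-- `l + l⁻¹ = tr A` is the characteristic equation `l² - (tr A) l + det A = 0` divided by `l`. -/
theorem leftEigenvector_vecMul_Amat {p q : ℤ} (hp : p ≠ 0) {l : ℝ} (hl0 : l ≠ 0)
    (hl : l + l⁻¹ = 2 + 1 / ((p : ℝ) * q)) :
    leftEigenvector p l ᵥ* Amat p q = l • leftEigenvector p l := by
  have hp' : (p : ℝ) ≠ 0 := Int.cast_ne_zero.mpr hp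
  ext i
  fin_cases i <;> simp [leftEigenvector, Amat, Matrix.vecMul, dotProduct, Fin.sum_univ_two]
  · field_simp
    ring
  · field_simp at hl ⊢
    linear_combination hl

theorem leftEigenvector_dotProduct_alphaAut_zpow {p q : ℤ} (hp : p ≠ 0) (hq : q ≠ 0) {l : ℝ}
    (hl0 : l ≠ 0) (hl : l + l⁻¹ = 2 + 1 / ((p : ℝ) * q)) (n : ℤ)
    (x : Multiplicative (Fin 2 → ℝ)) :
    leftEigenvector p l ⬝ᵥ ((alphaAut p q hp hq ^ n) x).toAdd =
      l ^ n * (leftEigenvector p l ⬝ᵥ x.toAdd) := by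
  refine MulAut.apply_zpow_of_apply (χ := fun y => leftEigenvector p l ⬝ᵥ y.toAdd) hl0
    (fun y => ?_) n x
  change _ ⬝ᵥ (Amat p q *ᵥ y.toAdd) = _
  rw [Matrix.dotProduct_mulVec, leftEigenvector_vecMul_Amat hp hl0 hl, smul_dotProduct,
    smul_eq_mul]

def eigenCoords (p : ℤ) (l : ℝ) (x : Multiplicative (Fin 2 → ℝ)) : ℝ ×ₗ ℝ :=
  toLex (leftEigenvector p l ⬝ᵥ x.toAdd, leftEigenvector p l⁻¹ ⬝ᵥ x.toAdd)

theorem eigenCoords_mul (p : ℤ) (l : ℝ) (x y : Multiplicative (Fin 2 → ℝ)) :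
    eigenCoords p l (x * y) = eigenCoords p l x + eigenCoords p l y := by
  simp only [eigenCoords, toAdd_mul, dotProduct_add]
  rfl

theorem eigenCoords_injective {p : ℤ} (hp : p ≠ 0) {l : ℝ} (hl : l ≠ l⁻¹) :
    Injective (eigenCoords p l) := by
  have hne : (p : ℝ) * (1 - l) ≠ p * (1 - l⁻¹) := by
    simpa [sub_eq_zero, hp, eq_comm] using hl
  exact toLex.injective.comp ((injective_dotProduct_pair hne).comp Multiplicative.toAdd.injective)

/-- for positive integers `p`, `q`, the group `K_{p,q}` is bi-orderable. -/
theorem kpq_biOrderable (p q : ℤ) (hp : 0 < p) (hq : 0 < q) :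
    IsBiOrderable (Kpq p q hp.ne' hq.ne') := by
  obtain ⟨l, hl1, hl⟩ : ∃ l : ℝ, 1 < l ∧ l + l⁻¹ = 2 + 1 / ((p : ℝ) * q) :=
    exists_one_lt_add_inv_eq (lt_add_of_pos_right _ (by positivity))
  have hl0 : 0 < l := one_pos.trans hl1
  have hl_inv : l⁻¹ + l⁻¹⁻¹ = 2 + 1 / ((p : ℝ) * q) := by rw [inv_inv, add_comm, hl]
  have hl_ne : l ≠ l⁻¹ := (inv_lt_one_of_one_lt₀ hl1 |>.trans hl1).ne'
  refine SemidirectProduct.isBiOrderable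
    (isBiOrder_lt_onFun _ (eigenCoords_injective hp.ne' hl_ne) (eigenCoords_mul p l))
    (isBiOrder_lt_onFun _ Multiplicative.toAdd.injective toAdd_mul) fun n x y hxy => ?_
  simp only [onFun, eigenCoords, zpowersHom_apply,
    leftEigenvector_dotProduct_alphaAut_zpow hp.ne' hq.ne' hl0.ne' hl,
    leftEigenvector_dotProduct_alphaAut_zpow hp.ne' hq.ne' (inv_ne_zero hl0.ne') hl_inv] at hxy ⊢
  exact Prod.Lex.toLex_map_lt_toLex_map (strictMono_mul_left_of_pos (zpow_pos hl0 _))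
    (strictMono_mul_left_of_pos (zpow_pos (inv_pos.mpr hl0) _)) hxy

end
end
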